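/- arXiv:2110.09902 — 6 statements merged into one kernel-verified Lean document; each statement's English description precedes it below -/
import Mathlib

section
/- Composition of an order-1 convolution with an order-n convolution equals order-n convolution with an outer-convolved kernel: for finitely supported G : ℤ → ℝ, H : ℤⁿ → ℝ and signals x₁,…,xₙ : ℤ → ℝ, (G * (H * {x₁,…,xₙ}))(t) = ((G ⊛ H) * {x₁,…,xₙ})(t) for all t, where (G ⊛ H)(τ₁,…,τₙ) = ∑_l G(l) H(τ₁−l,…,τₙ−l). -/
/-! Translating by the diagonal vector (l, …, l) turns the inner sum over `H.support` into a
sum over the common index set `(G.support ×ˢ H.support).image …`, since `H (· - l)` vanishes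
off the translate of `H.support`; after that the sums over `l` and `τ` are swapped. -/

theorem Finset.sum_eq_sum_comp_add_right {A M : Type*} [AddGroup A] [AddCommMonoid M]
    {s S : Finset A} {F : A → M} (c : A) (hsS : ∀ a ∈ s, a + c ∈ S)
    (hF : ∀ a ∈ S, a - c ∉ s → F a = 0) :
    ∑ a ∈ S, F a = ∑ a ∈ s, F (a + c) := by
  have hsub : s.map (Equiv.addRight c).toEmbedding ⊆ S := fun a ha => by
    obtain ⟨b, hb, rfl⟩ := Finset.mem_map.1 ha
    exact hsS b hb
  calc ∑ a ∈ S, F a = ∑ a ∈ s.map (Equiv.addRight c).toEmbedding, F a :=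
        (Finset.sum_subset hsub fun a haS ha =>
          hF a haS fun hs => ha (Finset.mem_map.2 ⟨a - c, hs, sub_add_cancel a c⟩)).symm
    _ = ∑ a ∈ s, F (a + c) := Finset.sum_map _ _ _

theorem Finsupp.sum_sub_const_mul_eq_sum_support {ι A R : Type*} [AddGroup A] [Semiring R]
    (H : (ι → A) →₀ R) (f : (ι → A) → R) {S : Finset (ι → A)} (l : A)
    (hS : ∀ σ ∈ H.support, (fun i => σ i + l) ∈ S) :
    ∑ τ ∈ S, H (fun i => τ i - l) * f τ = ∑ σ ∈ H.support, H σ * f (fun i => σ i + l) := by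
  rw [Finset.sum_eq_sum_comp_add_right (Function.const ι l) hS]
  · simp only [Pi.add_apply, Function.const_apply, add_sub_cancel_right]
    rfl
  · exact fun τ _ hτ => mul_eq_zero_of_left (Finsupp.notMem_support_iff.1 hτ) _

theorem conv1_comp_convn (n : ℕ) (G : ℤ →₀ ℝ) (H : (Fin n → ℤ) →₀ ℝ)
    (x : Fin n → ℤ → ℝ) (t : ℤ) :
    (∑ l ∈ G.support, G l * ∑ τ ∈ H.support, H τ * ∏ i, x i ((t - l) - τ i)) =
    ∑ τ ∈ (G.support ×ˢ H.support).image (fun p => fun i => p.2 i + p.1),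
      (∑ l ∈ G.support, G l * H (fun i => τ i - l)) * ∏ i, x i (t - τ i) := by
  set S := (G.support ×ˢ H.support).image (fun p => fun i => p.2 i + p.1)
  have shift (l : ℤ) (hl : l ∈ G.support) :
      ∑ τ ∈ H.support, H τ * ∏ i, x i ((t - l) - τ i) =
        ∑ τ ∈ S, H (fun i => τ i - l) * ∏ i, x i (t - τ i) := by
    rw [Finsupp.sum_sub_const_mul_eq_sum_support H _ l
      fun σ hσ => Finset.mem_image.2 ⟨(l, σ), Finset.mem_product.2 ⟨hl, hσ⟩, rfl⟩]
    simp_rw [sub_add_eq_sub_sub_swap]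
  calc _ = ∑ l ∈ G.support, ∑ τ ∈ S, G l * H (fun i => τ i - l) * ∏ i, x i (t - τ i) := by
        refine Finset.sum_congr rfl fun l hl => ?_
        simp_rw [shift l hl, Finset.mul_sum, mul_assoc]
    _ = _ := by
        rw [Finset.sum_comm]
        simp_rw [Finset.sum_mul]
end

section
/- Strided convolutions compose with multiplied strides: for finitely supported kernels g, h : ℤ → ℝ, a signal x : ℤ → ℝ, and positive integers s, z, one has (g *_s (h *_z x))(t) = ((g ⊛_z h) *_{sz} x)(t) for all t, where (g *_s x)(t) = ∑_τ g(τ) x(st − τ) and (g ⊛_z h)(τ) = ∑_l g(l) h(τ − z·l). -/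
/-! Both sides are the double sum of `g a * h b * x (s * z * t - (z * a + b))` over the pairs
`(a, b)` of the two supports, since `z * (s * t - a) - b = s * z * t - (z * a + b)`; the right
side groups the pairs by `τ = z * a + b`, and the fibre over `τ` is `{(l, τ - z * l)}`. -/

open Finset

theorem Finsupp.sum_mul_apply_sub_mul_eq_sum_filter_product {R : Type*} [Semiring R]
    (g h : ℤ →₀ R) (z τ : ℤ) :
    ∑ l ∈ g.support, g l * h (τ - z * l) =
      ∑ p ∈ g.support ×ˢ h.support with z * p.1 + p.2 = τ, g p.1 * h p.2 := by
  have hfiber : ∀ a b : ℤ, z * a + b = τ ↔ τ - z * a = b := fun a b => by omega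
  simp_rw [sum_filter, sum_product, hfiber]
  refine Finset.sum_congr rfl fun l _ => ?_
  rw [Finset.sum_ite_eq h.support (τ - z * l) (fun b => g l * h b)]
  by_cases hl : τ - z * l ∈ h.support
  · rw [if_pos hl]
  · rw [if_neg hl, notMem_support_iff.mp hl, mul_zero]

theorem strided_compose_general (g h : ℤ →₀ ℝ) (x : ℤ → ℝ) (s z : ℤ) (t : ℤ) :
    (∑ τ ∈ g.support, g τ * ∑ l ∈ h.support, h l * x (z * (s * t - τ) - l)) =
    ∑ τ ∈ (g.support ×ˢ h.support).image (fun p => z * p.1 + p.2),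
      (∑ l ∈ g.support, g l * h (τ - z * l)) * x (s * z * t - τ) := by
  have hpairs : (∑ τ ∈ g.support, g τ * ∑ l ∈ h.support, h l * x (z * (s * t - τ) - l)) =
      ∑ p ∈ g.support ×ˢ h.support, g p.1 * h p.2 * x (s * z * t - (z * p.1 + p.2)) := by
    simp_rw [sum_product, mul_sum]
    refine sum_congr rfl fun a _ => sum_congr rfl fun b _ => ?_
    ring_nf
  rw [hpairs, ← sum_fiberwise_of_maps_to (g := fun p : ℤ × ℤ => z * p.1 + p.2)
    fun p hp => mem_image_of_mem _ hp]
  refine sum_congr rfl fun τ _ => ?_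
  rw [Finsupp.sum_mul_apply_sub_mul_eq_sum_filter_product, sum_mul]
  refine sum_congr rfl fun p hp => ?_
  rw [(mem_filter.mp hp).2]

theorem strided_compose (g h : ℤ →₀ ℝ) (x : ℤ → ℝ) (s z : ℤ)
    (hs : 0 < s) (hz : 0 < z) (t : ℤ) :
    (∑ τ ∈ g.support, g τ * ∑ l ∈ h.support, h l * x (z * (s * t - τ) - l)) =
    ∑ τ ∈ (g.support ×ˢ h.support).image (fun p => z * p.1 + p.2),
      (∑ l ∈ g.support, g l * h (τ - z * l)) * x (s * z * t - τ) :=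
  strided_compose_general g h x s z t
end

section
/- For a finitely supported kernel G : ℤ² → ℝ, kernels H₁ : ℤⁿ → ℝ, H₂ : ℤᵐ → ℝ, and signals x₁,…,xₙ, y₁,…,y_m : ℤ → ℝ, the order-2 convolution of G with the pair (H₁ * x⃗, H₂ * y⃗) equals the order-(n+m) convolution of the outer convolution G ⊛ {H₁, H₂} with the signals (x⃗, y⃗): for all t, ∑_{l₁,l₂} G(l₁,l₂)(H₁ * x⃗)(t−l₁)(H₂ * y⃗)(t−l₂) = ∑_{τ⃗₁,τ⃗₂} (G ⊛ {H₁,H₂})(τ⃗₁,τ⃗₂) ∏ᵢ xᵢ(t−τ_{1,i}) ∏ⱼ yⱼ(t−τ_{2,j}). -/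
open Finset

/-!
Expanding the two inner convolutions writes the left-hand side as a sum over `l ∈ supp G` and
`(a, b) ∈ supp H₁ × supp H₂` of `G l H₁ a H₂ b` times the signals at the lags
`(a + l₁𝟙, b + l₂𝟙)`. On the right-hand side, exchange the sums over `τ` and `l`: for fixed `l`,
the translation `τ = (a + l₁𝟙, b + l₂𝟙)` maps `supp H₁ × supp H₂` into the range of `τ`, and every
other `τ` contributes `0`.
-/

theorem Finset.sum_sub_mul_eq_of_vanishing {A R : Type*} [AddGroup A]
    [NonUnitalNonAssocSemiring R] {s S : Finset A} {h : A → R} (hs : ∀ a ∉ s, h a = 0)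
    (c : A) (hS : ∀ a ∈ s, a + c ∈ S) (F : A → R) :
    ∑ τ ∈ S, h (τ - c) * F τ = ∑ a ∈ s, h a * F (a + c) := by
  refine (sum_of_injOn (· + c) (add_left_injective c).injOn hS (fun τ _ hτ => ?_)
    (fun a _ => by rw [add_sub_cancel_right])).symm
  rw [hs (τ - c) fun hmem => hτ ⟨τ - c, hmem, sub_add_cancel τ c⟩, zero_mul]

theorem Finsupp.sum_apply_sub_mul_apply_sub_mul {A B R : Type*} [AddGroup A] [AddGroup B]
    [NonUnitalNonAssocSemiring R] (f : A →₀ R) (g : B →₀ R) (c : A × B) {S : Finset (A × B)}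
    (hS : ∀ p ∈ f.support ×ˢ g.support, p + c ∈ S) (F : A × B → R) :
    ∑ τ ∈ S, f (τ.1 - c.1) * g (τ.2 - c.2) * F τ =
      ∑ p ∈ f.support ×ˢ g.support, f p.1 * g p.2 * F (p + c) := by
  refine sum_sub_mul_eq_of_vanishing (h := fun p => f p.1 * g p.2) (fun p hp => ?_) c hS F
  rcases not_and_or.1 (mem_product.not.1 hp) with hf | hg
  · rw [notMem_support_iff.1 hf, zero_mul]
  · rw [notMem_support_iff.1 hg, mul_zero]

theorem conv2_of_two_convs (n m : ℕ) (G : ℤ × ℤ →₀ ℝ)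
    (H₁ : (Fin n → ℤ) →₀ ℝ) (H₂ : (Fin m → ℤ) →₀ ℝ)
    (x : Fin n → ℤ → ℝ) (y : Fin m → ℤ → ℝ) (t : ℤ) :
    (∑ l ∈ G.support, G l *
        (∑ τ ∈ H₁.support, H₁ τ * ∏ i, x i ((t - l.1) - τ i)) *
        (∑ τ ∈ H₂.support, H₂ τ * ∏ j, y j ((t - l.2) - τ j))) =
    ∑ τ ∈ (G.support ×ˢ (H₁.support ×ˢ H₂.support)).image
        (fun p => ((fun i => p.2.1 i + p.1.1, fun j => p.2.2 j + p.1.2) :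
          (Fin n → ℤ) × (Fin m → ℤ))),
      (∑ l ∈ G.support, G l * H₁ (fun i => τ.1 i - l.1) * H₂ (fun j => τ.2 j - l.2)) *
        (∏ i, x i (t - τ.1 i)) * ∏ j, y j (t - τ.2 j) := by
  set I := (G.support ×ˢ (H₁.support ×ˢ H₂.support)).image
    (fun p => ((fun i => p.2.1 i + p.1.1, fun j => p.2.2 j + p.1.2) :
      (Fin n → ℤ) × (Fin m → ℤ)))
  let X : (Fin n → ℤ) × (Fin m → ℤ) → ℝ := fun τ => (∏ i, x i (t - τ.1 i)) * ∏ j, y j (t - τ.2 j)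
  let diag : ℤ × ℤ → (Fin n → ℤ) × (Fin m → ℤ) := fun l => (fun _ => l.1, fun _ => l.2)
  have hshift : ∀ l ∈ G.support,
      ∑ τ ∈ I, H₁ (fun i => τ.1 i - l.1) * H₂ (fun j => τ.2 j - l.2) * X τ =
        ∑ p ∈ H₁.support ×ˢ H₂.support, H₁ p.1 * H₂ p.2 * X (p + diag l) := fun l hl =>
    Finsupp.sum_apply_sub_mul_apply_sub_mul H₁ H₂ (diag l)
      (fun p hp => mem_image.2 ⟨(l, p), mem_product.2 ⟨hl, hp⟩, rfl⟩) X
  calc _ = ∑ l ∈ G.support, G l *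
        ∑ p ∈ H₁.support ×ˢ H₂.support, H₁ p.1 * H₂ p.2 * X (p + diag l) := by
        refine sum_congr rfl fun l _ => ?_
        rw [mul_assoc, sum_mul_sum, sum_product]
        refine congrArg _ (sum_congr rfl fun a _ => sum_congr rfl fun b _ => ?_)
        simp only [X, diag, Prod.fst_add, Prod.snd_add, Pi.add_apply, sub_sub, add_comm l.1,
          add_comm l.2]
        ring
    _ = ∑ l ∈ G.support, G l *
        ∑ τ ∈ I, H₁ (fun i => τ.1 i - l.1) * H₂ (fun j => τ.2 j - l.2) * X τ :=
        sum_congr rfl fun l hl => by rw [hshift l hl]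
    _ = _ := by
        simp only [mul_sum, sum_mul]
        rw [sum_comm]
        exact sum_congr rfl fun τ _ => sum_congr rfl fun l _ => by ring
end

section
/- Stacking two order-2 Volterra convolutions yields an order-4 Volterra convolution: given finitely supported kernels H₀ ∈ ℝ, H₁ : ℤ → ℝ, H₂ : ℤ² → ℝ and G₀ ∈ ℝ, G₁ : ℤ → ℝ, G₂ : ℤ² → ℝ, and any signal x : ℤ → ℝ, if y = H₀ + H₁*x + H₂*x², then G₀ + G₁*y + G₂*y² = ∑_{k=0}^{4} F_k * x^k, where F₀ = G₀ + H₀∑G₁ + H₀²∑G₂, F₁ = G₁⊛H₁ + ∑_{#H₀}(G₂⊛{H₀,H₁}) + ∑_{#H₀}(G₂⊛{H₁,H₀}), F₂ = G₁⊛H₂ + G₂⊛{H₁,H₁} + ∑_{#H₀}(G₂⊛{H₀,H₂}) + ∑_{#H₀}(G₂⊛{H₂,H₀}), F₃ = G₂⊛{H₁,H₂} + G₂⊛{H₂,H₁}, F₄ = G₂⊛{H₂,H₂}. -/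
/-!
Substitute `y = H₀ + H₁ * x + H₂ * x²` into `G₀ + G₁ * y + G₂ * y²` and expand: `G₁ * y` splits
into three terms and the bilinear form `G₂ * y²` into nine, each a weighted sum over `l` of
products of delayed copies `(H * xⁿ)(t - l)`. Exchanging the sums and translating the summation
variable by the delay turns `∑ l, G l * (H * xⁿ)(t - l)` into
`∑ τ, (∑ l, G l * H (τ - l)) * xⁿ(t - τ)`, the outer convolution, summed over any index set
containing the translated supports; collecting the terms by degree in `x` gives `F₀, …, F₄`.
-/

open Finset

namespace Finset

variable {ι κ R : Type*}

section Semiring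

variable [AddCommGroup κ] [Semiring R]

theorem sum_sub_mul_eq_sum_add_mul {T B : Finset κ} {g m : κ → R} {e : κ}
    (hg : Function.support g ⊆ B) (hT : ∀ k ∈ B, k + e ∈ T) :
    ∑ τ ∈ T, g (τ - e) * m τ = ∑ k ∈ B, g k * m (k + e) := by
  have hsub : B.map (addRightEmbedding e) ⊆ T := by
    simpa [subset_iff] using hT
  rw [← sum_subset hsub, sum_map]
  · simp
  · intro τ _ hτ
    have : τ - e ∉ B := fun h => hτ (mem_map.2 ⟨τ - e, h, by simp⟩)
    rw [Function.support_subset_iff'.1 hg _ this, zero_mul]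

theorem sum_conv_mul_eq_sum_mul_sum {S : Finset ι} {T B : Finset κ} {w : ι → R} {g m : κ → R}
    {e : ι → κ} (hg : Function.support g ⊆ B) (hT : ∀ l ∈ S, ∀ k ∈ B, k + e l ∈ T) :
    ∑ τ ∈ T, (∑ l ∈ S, w l * g (τ - e l)) * m τ =
      ∑ l ∈ S, w l * ∑ k ∈ B, g k * m (k + e l) := by
  calc _ = ∑ l ∈ S, w l * ∑ τ ∈ T, g (τ - e l) * m τ := by
        simp only [sum_mul, mul_sum, mul_assoc]
        exact sum_comm
    _ = _ := sum_congr rfl fun l hl => by rw [sum_sub_mul_eq_sum_add_mul hg (hT l hl)]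

end Semiring

variable [CommSemiring R]

theorem sum_mul_add_add (S : Finset ι) (w a b : ι → R) (c : R) :
    ∑ l ∈ S, w l * (c + a l + b l) =
      c * ∑ l ∈ S, w l + ∑ l ∈ S, w l * a l + ∑ l ∈ S, w l * b l := by
  simp only [mul_sum, ← sum_add_distrib]
  exact sum_congr rfl fun l _ => by ring

theorem sum_mul_add_add_mul_add_add (S : Finset ι) (w a b a' b' : ι → R) (c : R) :
    ∑ l ∈ S, w l * (c + a l + b l) * (c + a' l + b' l) =
      c ^ 2 * ∑ l ∈ S, w l + c * ∑ l ∈ S, w l * a' l + c * ∑ l ∈ S, w l * a l +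
        ∑ l ∈ S, w l * (a l * a' l) + c * ∑ l ∈ S, w l * b' l + c * ∑ l ∈ S, w l * b l +
        ∑ l ∈ S, w l * (a l * b' l) + ∑ l ∈ S, w l * (b l * a' l) +
        ∑ l ∈ S, w l * (b l * b' l) := by
  simp only [mul_sum, ← sum_add_distrib]
  exact sum_congr rfl fun l _ => by ring

theorem sum_product_mul_mul {α β : Type*} (A : Finset α) (B : Finset β) (f u : α → R)
    (g v : β → R) :
    ∑ k ∈ A ×ˢ B, f k.1 * g k.2 * (u k.1 * v k.2) =
      (∑ a ∈ A, f a * u a) * ∑ b ∈ B, g b * v b := by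
  rw [sum_mul_sum, sum_product]
  exact sum_congr rfl fun _ _ => sum_congr rfl fun _ _ => by ring

end Finset

theorem Finsupp.support_mul_subset_product {α β M : Type*} [MulZeroClass M] (F : α →₀ M)
    (F' : β →₀ M) :
    Function.support (fun k : α × β => F k.1 * F' k.2) ⊆ ↑(F.support ×ˢ F'.support) := by
  intro k hk
  simp only [coe_product, Set.mem_prod, mem_coe, Finsupp.mem_support_iff]
  exact ⟨left_ne_zero_of_mul hk, right_ne_zero_of_mul hk⟩

theorem Function.support_subset_map_equiv {α β M : Type*} [Zero M] {f : β → M} {s : Finset α}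
    (φ : α ≃ β) (h : Function.support (f ∘ φ) ⊆ s) : Function.support f ⊆ s.map φ.toEmbedding := by
  intro k hk
  rw [mem_coe, mem_map_equiv]
  exact h (by simpa using hk)

section Volterra

variable {ι G R : Type*} [AddCommGroup G] [CommSemiring R]

def volterra₁ (K : G →₀ R) (x : G → R) (t : G) : R :=
  ∑ τ ∈ K.support, K τ * x (t - τ)

def volterra₂ (K : G × G →₀ R) (x : G → R) (t : G) : R :=
  ∑ τ ∈ K.support, K τ * x (t - τ.1) * x (t - τ.2)

theorem volterra₁_sub (K : G →₀ R) (x : G → R) (t s : G) :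
    volterra₁ K x (t - s) = ∑ k ∈ K.support, K k * x (t - (k + s)) := by
  simp only [volterra₁, sub_add_eq_sub_sub_swap]

theorem volterra₂_sub (K : G × G →₀ R) (x : G → R) (t s : G) :
    volterra₂ K x (t - s) = ∑ k ∈ K.support, K k * (x (t - (k.1 + s)) * x (t - (k.2 + s))) := by
  simp only [volterra₂, sub_add_eq_sub_sub_swap, mul_assoc]

variable {S : Finset ι} {w : ι → R} {x : G → R} {t : G}

theorem sum_conv_mul_eq_sum_mul_volterra₁ {T : Finset G} {H : G →₀ R} {e : ι → G}
    (hT : ∀ l ∈ S, ∀ k ∈ H.support, k + e l ∈ T) :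
    ∑ τ ∈ T, (∑ l ∈ S, w l * H (τ - e l)) * x (t - τ) =
      ∑ l ∈ S, w l * volterra₁ H x (t - e l) := by
  rw [sum_conv_mul_eq_sum_mul_sum H.fun_support_eq.subset hT]
  simp only [volterra₁_sub]

theorem sum_conv_mul_eq_sum_mul_volterra₂ {T : Finset (G × G)} {H : G × G →₀ R} {e : ι → G}
    (hT : ∀ l ∈ S, ∀ k ∈ H.support, (k.1 + e l, k.2 + e l) ∈ T) :
    ∑ τ ∈ T, (∑ l ∈ S, w l * H (τ.1 - e l, τ.2 - e l)) * (x (t - τ.1) * x (t - τ.2)) =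
      ∑ l ∈ S, w l * volterra₂ H x (t - e l) := by
  refine (sum_conv_mul_eq_sum_mul_sum (e := fun l => (e l, e l))
    H.fun_support_eq.subset hT).trans ?_
  simp only [volterra₂_sub, Prod.fst_add, Prod.snd_add]

theorem sum_conv_mul_eq_sum_mul_volterra₁_mul_volterra₁ {T : Finset (G × G)} {H H' : G →₀ R}
    {e₁ e₂ : ι → G} (hT : ∀ l ∈ S, ∀ k ∈ H.support ×ˢ H'.support, (k.1 + e₁ l, k.2 + e₂ l) ∈ T) :
    ∑ τ ∈ T, (∑ l ∈ S, w l * H (τ.1 - e₁ l) * H' (τ.2 - e₂ l)) * (x (t - τ.1) * x (t - τ.2)) =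
      ∑ l ∈ S, w l * (volterra₁ H x (t - e₁ l) * volterra₁ H' x (t - e₂ l)) := by
  simp only [mul_assoc (w _)]
  refine (sum_conv_mul_eq_sum_mul_sum (e := fun l => (e₁ l, e₂ l))
    (H.support_mul_subset_product H') hT).trans ?_
  refine sum_congr rfl fun l _ => ?_
  rw [volterra₁_sub, volterra₁_sub, ← sum_product_mul_mul]
  rfl

theorem sum_conv_mul_eq_sum_mul_volterra₁_mul_volterra₂ {T : Finset (G × G × G)} {H : G →₀ R}
    {H' : G × G →₀ R} {e₁ e₂ : ι → G}
    (hT : ∀ l ∈ S, ∀ k ∈ H.support ×ˢ H'.support, (k.1 + e₁ l, k.2.1 + e₂ l, k.2.2 + e₂ l) ∈ T) :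
    ∑ τ ∈ T, (∑ l ∈ S, w l * H (τ.1 - e₁ l) * H' (τ.2.1 - e₂ l, τ.2.2 - e₂ l)) *
        (x (t - τ.1) * x (t - τ.2.1) * x (t - τ.2.2)) =
      ∑ l ∈ S, w l * (volterra₁ H x (t - e₁ l) * volterra₂ H' x (t - e₂ l)) := by
  simp only [mul_assoc (w _), mul_assoc (x _)]
  refine (sum_conv_mul_eq_sum_mul_sum (e := fun l => (e₁ l, e₂ l, e₂ l))
    (H.support_mul_subset_product H') hT).trans ?_
  refine sum_congr rfl fun l _ => ?_
  rw [volterra₁_sub, volterra₂_sub, ← sum_product_mul_mul]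
  rfl

theorem sum_conv_mul_eq_sum_mul_volterra₂_mul_volterra₁ {T : Finset (G × G × G)}
    {H : G × G →₀ R} {H' : G →₀ R} {e₁ e₂ : ι → G}
    (hT : ∀ l ∈ S, ∀ k ∈ H.support ×ˢ H'.support, (k.1.1 + e₁ l, k.1.2 + e₁ l, k.2 + e₂ l) ∈ T) :
    ∑ τ ∈ T, (∑ l ∈ S, w l * H (τ.1 - e₁ l, τ.2.1 - e₁ l) * H' (τ.2.2 - e₂ l)) *
        (x (t - τ.1) * x (t - τ.2.1) * x (t - τ.2.2)) =
      ∑ l ∈ S, w l * (volterra₂ H x (t - e₁ l) * volterra₁ H' x (t - e₂ l)) := by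
  simp only [mul_assoc (w _)]
  have hg : Function.support (fun k : G × G × G => H (k.1, k.2.1) * H' k.2.2) ⊆
      ↑((H.support ×ˢ H'.support).map (Equiv.prodAssoc G G G).toEmbedding) :=
    Function.support_subset_map_equiv _ (H.support_mul_subset_product H')
  refine (sum_conv_mul_eq_sum_mul_sum (e := fun l => (e₁ l, e₁ l, e₂ l))
    (m := fun τ => x (t - τ.1) * x (t - τ.2.1) * x (t - τ.2.2)) hg ?_).trans ?_
  · intro l hl k hk
    obtain ⟨q, hq, rfl⟩ := mem_map.1 hk
    exact hT l hl q hq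
  · refine sum_congr rfl fun l _ => ?_
    rw [volterra₂_sub, volterra₁_sub, ← sum_product_mul_mul, sum_map]
    rfl

theorem sum_conv_mul_eq_sum_mul_volterra₂_mul_volterra₂ {T : Finset (G × G × G × G)}
    {H H' : G × G →₀ R} {e₁ e₂ : ι → G}
    (hT : ∀ l ∈ S, ∀ k ∈ H.support ×ˢ H'.support,
      (k.1.1 + e₁ l, k.1.2 + e₁ l, k.2.1 + e₂ l, k.2.2 + e₂ l) ∈ T) :
    ∑ τ ∈ T, (∑ l ∈ S, w l * H (τ.1 - e₁ l, τ.2.1 - e₁ l) * H' (τ.2.2.1 - e₂ l, τ.2.2.2 - e₂ l)) *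
        (x (t - τ.1) * x (t - τ.2.1) * x (t - τ.2.2.1) * x (t - τ.2.2.2)) =
      ∑ l ∈ S, w l * (volterra₂ H x (t - e₁ l) * volterra₂ H' x (t - e₂ l)) := by
  simp only [mul_assoc (w _), mul_assoc (x _ * x _)]
  have hg : Function.support (fun k : G × G × G × G => H (k.1, k.2.1) * H' k.2.2) ⊆
      ↑((H.support ×ˢ H'.support).map (Equiv.prodAssoc G G (G × G)).toEmbedding) :=
    Function.support_subset_map_equiv _ (H.support_mul_subset_product H')
  refine (sum_conv_mul_eq_sum_mul_sum (e := fun l => (e₁ l, e₁ l, e₂ l, e₂ l))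
    (m := fun τ => x (t - τ.1) * x (t - τ.2.1) * (x (t - τ.2.2.1) * x (t - τ.2.2.2))) hg
    ?_).trans ?_
  · intro l hl k hk
    obtain ⟨q, hq, rfl⟩ := mem_map.1 hk
    exact hT l hl q hq
  · refine sum_congr rfl fun l _ => ?_
    rw [volterra₂_sub, volterra₂_sub, ← sum_product_mul_mul, sum_map]
    rfl

end Volterra

theorem stack_order2_order2
    (H₀ G₀ : ℝ) (H₁ G₁ : ℤ →₀ ℝ) (H₂ G₂ : ℤ × ℤ →₀ ℝ) (x y : ℤ → ℝ)
    (hy : ∀ t, y t = H₀ + (∑ τ ∈ H₁.support, H₁ τ * x (t - τ)) +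
        ∑ τ ∈ H₂.support, H₂ τ * x (t - τ.1) * x (t - τ.2)) (t : ℤ) :
    G₀ + (∑ τ ∈ G₁.support, G₁ τ * y (t - τ)) +
      (∑ τ ∈ G₂.support, G₂ τ * y (t - τ.1) * y (t - τ.2)) =
    (G₀ + H₀ * (∑ τ ∈ G₁.support, G₁ τ) + H₀ ^ 2 * ∑ τ ∈ G₂.support, G₂ τ) +
    (∑ τ ∈ ((G₁.support ×ˢ H₁.support).image fun p => p.2 + p.1) ∪
        ((G₂.support ×ˢ H₁.support).image fun p => p.2 + p.1.2) ∪
        ((G₂.support ×ˢ H₁.support).image fun p => p.2 + p.1.1),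
      ((∑ l ∈ G₁.support, G₁ l * H₁ (τ - l)) +
       H₀ * (∑ l ∈ G₂.support, G₂ l * H₁ (τ - l.2)) +
       H₀ * (∑ l ∈ G₂.support, G₂ l * H₁ (τ - l.1))) * x (t - τ)) +
    (∑ τ ∈ ((G₁.support ×ˢ H₂.support).image fun p => (p.2.1 + p.1, p.2.2 + p.1)) ∪
        ((G₂.support ×ˢ (H₁.support ×ˢ H₁.support)).image
          fun p => (p.2.1 + p.1.1, p.2.2 + p.1.2)) ∪
        ((G₂.support ×ˢ H₂.support).image fun p => (p.2.1 + p.1.2, p.2.2 + p.1.2)) ∪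
        ((G₂.support ×ˢ H₂.support).image fun p => (p.2.1 + p.1.1, p.2.2 + p.1.1)),
      ((∑ l ∈ G₁.support, G₁ l * H₂ (τ.1 - l, τ.2 - l)) +
       (∑ l ∈ G₂.support, G₂ l * H₁ (τ.1 - l.1) * H₁ (τ.2 - l.2)) +
       H₀ * (∑ l ∈ G₂.support, G₂ l * H₂ (τ.1 - l.2, τ.2 - l.2)) +
       H₀ * (∑ l ∈ G₂.support, G₂ l * H₂ (τ.1 - l.1, τ.2 - l.1))) *
        (x (t - τ.1) * x (t - τ.2))) +
    (∑ τ ∈ ((G₂.support ×ˢ (H₁.support ×ˢ H₂.support)).image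
          fun p => (p.2.1 + p.1.1, p.2.2.1 + p.1.2, p.2.2.2 + p.1.2)) ∪
        ((G₂.support ×ˢ (H₂.support ×ˢ H₁.support)).image
          fun p => (p.2.1.1 + p.1.1, p.2.1.2 + p.1.1, p.2.2 + p.1.2)),
      ((∑ l ∈ G₂.support, G₂ l * H₁ (τ.1 - l.1) * H₂ (τ.2.1 - l.2, τ.2.2 - l.2)) +
       (∑ l ∈ G₂.support, G₂ l * H₂ (τ.1 - l.1, τ.2.1 - l.1) * H₁ (τ.2.2 - l.2))) *
        (x (t - τ.1) * x (t - τ.2.1) * x (t - τ.2.2))) +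
    (∑ τ ∈ (G₂.support ×ˢ (H₂.support ×ˢ H₂.support)).image
          (fun p => (p.2.1.1 + p.1.1, p.2.1.2 + p.1.1, p.2.2.1 + p.1.2, p.2.2.2 + p.1.2)),
      (∑ l ∈ G₂.support,
          G₂ l * H₂ (τ.1 - l.1, τ.2.1 - l.1) * H₂ (τ.2.2.1 - l.2, τ.2.2.2 - l.2)) *
        (x (t - τ.1) * x (t - τ.2.1) * x (t - τ.2.2.1) * x (t - τ.2.2.2))) := by
  have hy' : ∀ s, y s = H₀ + volterra₁ H₁ x s + volterra₂ H₂ x s := hy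
  simp only [hy']
  rw [sum_mul_add_add_mul_add_add, sum_mul_add_add G₁.support]
  simp only [add_mul, sum_add_distrib, mul_assoc H₀, ← mul_sum]
  rw [sum_conv_mul_eq_sum_mul_volterra₁, sum_conv_mul_eq_sum_mul_volterra₁,
    sum_conv_mul_eq_sum_mul_volterra₁, sum_conv_mul_eq_sum_mul_volterra₂,
    sum_conv_mul_eq_sum_mul_volterra₂, sum_conv_mul_eq_sum_mul_volterra₂,
    sum_conv_mul_eq_sum_mul_volterra₁_mul_volterra₁,
    sum_conv_mul_eq_sum_mul_volterra₁_mul_volterra₂,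
    sum_conv_mul_eq_sum_mul_volterra₂_mul_volterra₁,
    sum_conv_mul_eq_sum_mul_volterra₂_mul_volterra₂]
  · ring
  -- side conditions: each index set of the statement contains the translated product of supports
  all_goals
    intro l hl k hk
    solve_by_elim only [mem_union_left, mem_union_right,
      fun f => mem_image_of_mem f (mk_mem_product hl hk)]
end

section
/- Perturbation bound for an order-n convolution term: for a finitely supported symmetric kernel Hₙ : ℤⁿ → ℝ and finitely supported signals x, y : ℤ → ℝ, ‖Hₙ * (x+y)ⁿ − Hₙ * xⁿ‖₂ ≤ ‖Hₙ‖₂ · ∑_{k=0}^{n−1} C(n,k) ‖x‖₁ᵏ ‖y‖₁^{n−k}, where C(n,k) is the binomial coefficient. -/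
/-!
Expanding `∏ᵢ (x + y)(t - τᵢ)` over the subsets `S` of the coordinates writes the difference as
the sum, over `S ≠ univ`, of the multilinear convolutions of `H` with `x` on `S` and `y` off `S`.
Substituting `a = t - τ`, each of these is a finite combination `∑ₐ (∏ᵢ uᵢ(aᵢ)) • H(t - a)` of
diagonal translates of `H`; a translate has `ℓ²`-norm at most `‖H‖₂` because `t ↦ t - a` is
injective on the diagonal. The triangle inequality in `ℓ²(ℤ)` bounds the term for `S` by
`‖H‖₂ ‖x‖₁^|S| ‖y‖₁^(n-|S|)`, and counting the subsets by size gives the binomial coefficients.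
-/

open Finset

theorem memℓp_two_of_summable_sq {α : Type*} {f : α → ℝ} (hf : Summable fun a => f a ^ 2) :
    Memℓp f 2 :=
  memℓp_gen (by simpa using hf)

theorem lp.norm_sq_eq_tsum_sq {α : Type*} (f : lp (fun _ : α => ℝ) 2) :
    ‖f‖ ^ 2 = ∑' a, f a ^ 2 := by
  rw [← real_inner_self_eq_norm_sq, lp.inner_eq_tsum]
  simp [sq]

theorem Finsupp.summable_sq {α : Type*} (H : α →₀ ℝ) : Summable fun a => H a ^ 2 :=
  summable_of_ne_finset_zero fun a ha => by rw [Finsupp.notMem_support_iff.mp ha, sq, zero_mul]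

theorem Finsupp.tsum_sq_eq_sum_support {α : Type*} (H : α →₀ ℝ) :
    ∑' a, H a ^ 2 = ∑ a ∈ H.support, H a ^ 2 :=
  tsum_eq_sum fun a ha => by rw [Finsupp.notMem_support_iff.mp ha, sq, zero_mul]

theorem Finset.prod_apply_piecewise {ι β M : Type*} [Fintype ι] [DecidableEq ι] [CommMonoid M]
    (S : Finset ι) (u v : ι → β) (F : ι → β → M) :
    ∏ i, F i (S.piecewise u v i) = (∏ i ∈ S, F i (u i)) * ∏ i ∈ Sᶜ, F i (v i) := by
  rw [← prod_mul_prod_compl S]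
  congr 1 <;> refine prod_congr rfl fun i hi => ?_
  · rw [piecewise_eq_of_mem _ _ _ hi]
  · rw [piecewise_eq_of_notMem _ _ _ (mem_compl.mp hi)]

theorem Finset.sum_erase_univ_apply_card {ι M : Type*} [Fintype ι] [DecidableEq ι]
    [AddCancelCommMonoid M] (f : ℕ → M) :
    ∑ S ∈ univ.erase (univ : Finset ι), f #S =
      ∑ k ∈ range (Fintype.card ι), (Fintype.card ι).choose k • f k := by
  refine add_right_cancel (b := f #(univ : Finset ι)) ?_
  rw [sum_erase_add (f := fun S : Finset ι => f #S) _ (mem_univ _), ← powerset_univ,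
    sum_powerset_apply_card, card_univ, sum_range_succ, Nat.choose_self, one_smul]

section Shift

variable {ι : Type*} [Nonempty ι]

theorem injective_diagonal_sub (a : ι → ℤ) : Function.Injective fun t : ℤ => fun i => t - a i := by
  intro s t h
  obtain ⟨i⟩ := ‹Nonempty ι›
  simpa using congrFun h i

noncomputable def shiftedKernel (H : (ι → ℤ) →₀ ℝ) (a : ι → ℤ) : lp (fun _ : ℤ => ℝ) 2 :=
  ⟨fun t => H (fun i => t - a i),
    memℓp_two_of_summable_sq (H.summable_sq.comp_injective (injective_diagonal_sub a))⟩

theorem norm_shiftedKernel_le (H : (ι → ℤ) →₀ ℝ) (a : ι → ℤ) :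
    ‖shiftedKernel H a‖ ≤ √(∑ τ ∈ H.support, H τ ^ 2) := by
  rw [← Real.sqrt_sq (norm_nonneg _), lp.norm_sq_eq_tsum_sq, ← H.tsum_sq_eq_sum_support]
  exact Real.sqrt_le_sqrt <| tsum_comp_le_tsum_of_inj H.summable_sq (fun _ => sq_nonneg _)
    (injective_diagonal_sub a)

end Shift

section MultiConv

variable {ι : Type*} [Fintype ι]

def multiConv (H : (ι → ℤ) →₀ ℝ) (u : ι → ℤ →₀ ℝ) (t : ℤ) : ℝ :=
  ∑ τ ∈ H.support, H τ * ∏ i, u i (t - τ i)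

variable [DecidableEq ι]

theorem multiConv_add (H : (ι → ℤ) →₀ ℝ) (u v : ι → ℤ →₀ ℝ) (t : ℤ) :
    multiConv H (u + v) t = ∑ S : Finset ι, multiConv H (S.piecewise u v) t := by
  simp only [multiConv]
  rw [sum_comm]
  refine sum_congr rfl fun τ _ => ?_
  simp only [Pi.add_apply, Finsupp.add_apply, Fintype.prod_add, mul_sum]
  refine sum_congr rfl fun S _ => ?_
  exact congrArg _ (prod_apply_piecewise S u v fun i f => f (t - τ i)).symm

theorem multiConv_eq_sum_shift (H : (ι → ℤ) →₀ ℝ) (u : ι → ℤ →₀ ℝ) (t : ℤ) :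
    multiConv H u t =
      ∑ a ∈ Fintype.piFinset fun i => (u i).support, (∏ i, u i (a i)) * H (fun i => t - a i) := by
  let e : (ι → ℤ) ≃ (ι → ℤ) := Equiv.piCongrRight fun _ => Equiv.subLeft t
  calc multiConv H u t = ∑' τ, H τ * ∏ i, u i (t - τ i) :=
        (tsum_eq_sum fun τ hτ => by rw [Finsupp.notMem_support_iff.mp hτ, zero_mul]).symm
    _ = ∑' a : ι → ℤ, (∏ i, u i (a i)) * H (fun i => t - a i) := by
        rw [← e.tsum_eq]
        refine tsum_congr fun a => ?_
        change H (fun i => t - a i) * ∏ i, u i (t - (t - a i)) = _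
        simp only [sub_sub_cancel, mul_comm]
    _ = _ := tsum_eq_sum fun a ha => by
        obtain ⟨i, hi⟩ : ∃ i, a i ∉ (u i).support := by simpa [Fintype.mem_piFinset] using ha
        exact mul_eq_zero_of_left
          (prod_eq_zero (f := fun i => u i (a i)) (mem_univ i) (Finsupp.notMem_support_iff.mp hi)) _

variable [Nonempty ι]

noncomputable def multiConvLp (H : (ι → ℤ) →₀ ℝ) (u : ι → ℤ →₀ ℝ) : lp (fun _ : ℤ => ℝ) 2 :=
  ∑ a ∈ Fintype.piFinset fun i => (u i).support, (∏ i, u i (a i)) • shiftedKernel H a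

@[simp]
theorem coe_multiConvLp (H : (ι → ℤ) →₀ ℝ) (u : ι → ℤ →₀ ℝ) :
    ⇑(multiConvLp H u) = multiConv H u := by
  ext t
  rw [multiConvLp, lp.coeFn_sum, Finset.sum_apply, multiConv_eq_sum_shift]
  rfl

theorem norm_multiConvLp_le (H : (ι → ℤ) →₀ ℝ) (u : ι → ℤ →₀ ℝ) :
    ‖multiConvLp H u‖ ≤ √(∑ τ ∈ H.support, H τ ^ 2) * ∏ i, ∑ a ∈ (u i).support, |u i a| := by
  calc ‖multiConvLp H u‖
      ≤ ∑ a ∈ Fintype.piFinset fun i => (u i).support,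
          ‖(∏ i, u i (a i)) • shiftedKernel H a‖ := norm_sum_le _ _
    _ ≤ ∑ a ∈ Fintype.piFinset fun i => (u i).support,
          |∏ i, u i (a i)| * √(∑ τ ∈ H.support, H τ ^ 2) := by
        gcongr with a
        rw [norm_smul, Real.norm_eq_abs]
        exact mul_le_mul_of_nonneg_left (norm_shiftedKernel_le H a) (abs_nonneg _)
    _ = _ := by
        rw [← sum_mul, mul_comm, prod_univ_sum]
        simp_rw [abs_prod]

end MultiConv

theorem perturbation_term_bound_general (n : ℕ) (H : (Fin n → ℤ) →₀ ℝ)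
    (x y : ℤ →₀ ℝ) :
    (∑' t : ℤ,
        ((∑ τ ∈ H.support, H τ * ∏ i, (x (t - τ i) + y (t - τ i))) -
          ∑ τ ∈ H.support, H τ * ∏ i, x (t - τ i)) ^ 2) ≤
    (Real.sqrt (∑ τ ∈ H.support, (H τ) ^ 2) *
      ∑ k ∈ Finset.range n, (n.choose k : ℝ) *
        (∑ a ∈ x.support, |x a|) ^ k * (∑ a ∈ y.support, |y a|) ^ (n - k)) ^ 2 := by
  rcases n.eq_zero_or_pos with rfl | hn
  · simp
  have : Nonempty (Fin n) := ⟨⟨0, hn⟩⟩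
  set X := ∑ a ∈ x.support, |x a|
  set Y := ∑ a ∈ y.support, |y a|
  let w : Finset (Fin n) → Fin n → ℤ →₀ ℝ := fun S => S.piecewise (fun _ => x) (fun _ => y)
  have hw (S) : ∏ i, ∑ a ∈ (w S i).support, |w S i a| = X ^ #S * Y ^ (n - #S) :=
    (prod_apply_piecewise S _ _ fun _ (f : ℤ →₀ ℝ) => ∑ a ∈ f.support, |f a|).trans <| by
      rw [prod_const, prod_const, card_compl, Fintype.card_fin]
  let F := ∑ S ∈ univ.erase univ, multiConvLp H (w S)
  have hF : ∀ t, F t = multiConv H ((fun _ => x) + fun _ => y) t - multiConv H (fun _ => x) t :=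
    fun t => by
      rw [multiConv_add, ← sum_erase_add _ _ (mem_univ univ), piecewise_univ, add_sub_cancel_right,
        lp.coeFn_sum, Finset.sum_apply]
      simp only [coe_multiConvLp, w]
  calc _ = ‖F‖ ^ 2 := by simp only [lp.norm_sq_eq_tsum_sq, hF]; rfl
    _ ≤ (∑ S ∈ univ.erase univ, ‖multiConvLp H (w S)‖) ^ 2 := by gcongr; exact norm_sum_le _ _
    _ ≤ (∑ S ∈ univ.erase univ, √(∑ τ ∈ H.support, H τ ^ 2) * (X ^ #S * Y ^ (n - #S))) ^ 2 := by
        gcongr with S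
        exact hw S ▸ norm_multiConvLp_le H (w S)
    _ = _ := by
        rw [← mul_sum, sum_erase_univ_apply_card fun k => X ^ k * Y ^ (n - k), Fintype.card_fin]
        simp only [nsmul_eq_mul, mul_assoc]

theorem perturbation_term_bound (n : ℕ) (H : (Fin n → ℤ) →₀ ℝ)
    (hsym : ∀ σ : Equiv.Perm (Fin n), ∀ τ : Fin n → ℤ, H (τ ∘ σ) = H τ)
    (x y : ℤ →₀ ℝ) :
    (∑' t : ℤ,
        ((∑ τ ∈ H.support, H τ * ∏ i, (x (t - τ i) + y (t - τ i))) -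
          ∑ τ ∈ H.support, H τ * ∏ i, x (t - τ i)) ^ 2) ≤
    (Real.sqrt (∑ τ ∈ H.support, (H τ) ^ 2) *
      ∑ k ∈ Finset.range n, (n.choose k : ℝ) *
        (∑ a ∈ x.support, |x a|) ^ k * (∑ a ∈ y.support, |y a|) ^ (n - k)) ^ 2 :=
  perturbation_term_bound_general n H x y
end

section
/- Rank bound for two-dimensional convolution: for real matrices G and H (viewed as finitely supported kernels), the two-dimensional convolution (G * H)(t₁,t₂) = ∑_{τ₁,τ₂} G(τ₁,τ₂) H(t₁−τ₁, t₂−τ₂) satisfies rank(G * H) ≤ rank(G) · rank(H). -/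
/-- Zero padding of a finite matrix to a function on `ℤ × ℤ`. -/
noncomputable def padMat {a b : ℕ} (H : Matrix (Fin a) (Fin b) ℝ) : ℤ → ℤ → ℝ :=
  fun i j => if hij : 0 ≤ i ∧ i < a ∧ 0 ≤ j ∧ j < b then
    H ⟨i.toNat, by omega⟩ ⟨j.toNat, by omega⟩ else 0

/-!
Factor `H = U * C` through `Fin (rank H)`. After zero padding, the kernel of the convolution
becomes a sum of `rank H` separable kernels `u k i * v k j`. Convolution is linear in the kernel,
and convolving `G` with a separable kernel `f i * g j` is the product `T_f * G * T_gᵀ` with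
Toeplitz matrices `T_f`, `T_g`, so each summand has rank at most `rank G`; subadditivity of
rank gives the bound.
-/

open scoped Matrix

namespace Matrix

variable {K m n : Type*} [Field K] [Fintype n]

theorem rank_add_le (A B : Matrix m n K) : (A + B).rank ≤ A.rank + B.rank := by
  rw [rank, mulVecLin_add]
  exact (Submodule.finrank_mono (LinearMap.range_add_le _ _)).trans
    (Submodule.finrank_add_le_finrank_add_finrank _ _)

theorem rank_finsetSum_le {ι : Type*} (s : Finset ι) (A : ι → Matrix m n K) :
    (∑ i ∈ s, A i).rank ≤ ∑ i ∈ s, (A i).rank :=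
  Finset.sum_hom_rel (r := fun (A : Matrix m n K) r => A.rank ≤ r) (rank_zero (R := K)).le
    fun _ _ _ h => (rank_add_le _ _).trans (by gcongr)

theorem exists_rank_factorization [DecidableEq n] (H : Matrix m n K) :
    ∃ (U : Matrix m (Fin H.rank) K) (C : Matrix (Fin H.rank) n K), U * C = H := by
  let b := Module.finBasis K (LinearMap.range H.mulVecLin)
  have hcol (j : n) : H.col j ∈ LinearMap.range H.mulVecLin :=
    ⟨Pi.single j 1, mulVec_single_one H j⟩
  refine ⟨of fun i k => (b k : m → K) i, of fun k j => b.repr ⟨H.col j, hcol j⟩ k, ?_⟩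
  ext i j
  have := congr_fun (congr_arg Subtype.val (b.sum_repr ⟨H.col j, hcol j⟩)) i
  rw [Submodule.coe_sum, Finset.sum_apply] at this
  simp only [Submodule.coe_smul, Pi.smul_apply, smul_eq_mul, col_apply, mul_comm] at this
  exact this

end Matrix

def padVec {R : Type*} [Zero R] {n : ℕ} (u : Fin n → R) : ℤ → R :=
  fun i => if h : 0 ≤ i ∧ i < n then u ⟨i.toNat, by omega⟩ else 0

theorem padMat_mul {b₁ b₂ : ℕ} {κ : Type*} [Fintype κ] (U : Matrix (Fin b₁) κ ℝ)
    (C : Matrix κ (Fin b₂) ℝ) :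
    padMat (U * C) = fun i j => ∑ k, padVec (Uᵀ k) i * padVec (C k) j := by
  ext i j
  unfold padMat padVec
  by_cases hi : 0 ≤ i ∧ i < b₁ <;> by_cases hj : 0 ≤ j ∧ j < b₂ <;>
    simp [hi, hj, Matrix.mul_apply]

section Convolution

variable {R : Type*} {a₁ a₂ : ℕ}

def toeplitz [Zero R] (m n : ℕ) (f : ℤ → R) : Matrix (Fin m) (Fin n) R :=
  Matrix.of fun t τ => f ((t : ℤ) - τ)

def conv2d [NonUnitalNonAssocSemiring R] (s₁ s₂ : ℕ) (G : Matrix (Fin a₁) (Fin a₂) R)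
    (K : ℤ → ℤ → R) : Matrix (Fin s₁) (Fin s₂) R :=
  Matrix.of fun t₁ t₂ => ∑ τ₁, ∑ τ₂, G τ₁ τ₂ * K ((t₁ : ℤ) - τ₁) ((t₂ : ℤ) - τ₂)

theorem conv2d_finsetSum [NonUnitalNonAssocSemiring R] {ι : Type*} (s₁ s₂ : ℕ)
    (G : Matrix (Fin a₁) (Fin a₂) R) (s : Finset ι) (K : ι → ℤ → ℤ → R) :
    conv2d s₁ s₂ G (∑ k ∈ s, K k : ℤ → ℤ → R) = ∑ k ∈ s, conv2d s₁ s₂ G (K k) := by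
  ext t₁ t₂
  simp only [conv2d, Matrix.of_apply, Matrix.sum_apply, Finset.sum_apply, Finset.mul_sum]
  rw [Finset.sum_comm (s := s)]
  exact Finset.sum_congr rfl fun _ _ => Finset.sum_comm

theorem conv2d_mul_separable [CommSemiring R] (s₁ s₂ : ℕ) (G : Matrix (Fin a₁) (Fin a₂) R)
    (f g : ℤ → R) :
    conv2d s₁ s₂ G (fun i j => f i * g j) = toeplitz s₁ a₁ f * G * (toeplitz s₂ a₂ g)ᵀ := by
  ext t₁ t₂
  simp only [conv2d, toeplitz, Matrix.of_apply, Matrix.mul_apply, Matrix.transpose_apply,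
    Finset.sum_mul]
  rw [Finset.sum_comm]
  exact Finset.sum_congr rfl fun _ _ => Finset.sum_congr rfl fun _ _ => by ring

theorem rank_conv2d_le [Field R] {κ : Type*} [Fintype κ] (s₁ s₂ : ℕ)
    (G : Matrix (Fin a₁) (Fin a₂) R) (f g : κ → ℤ → R) :
    (conv2d s₁ s₂ G fun i j => ∑ k, f k i * g k j).rank ≤ Fintype.card κ * G.rank := by
  have hK : (fun i j => ∑ k, f k i * g k j) = ∑ k, fun i j => f k i * g k j := by
    ext; simp [Finset.sum_apply]
  calc (conv2d s₁ s₂ G fun i j => ∑ k, f k i * g k j).rank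
      ≤ ∑ k, (toeplitz s₁ a₁ (f k) * G * (toeplitz s₂ a₂ (g k))ᵀ).rank := by
        rw [hK, conv2d_finsetSum]
        simp only [conv2d_mul_separable]
        exact Matrix.rank_finsetSum_le _ _
    _ ≤ ∑ _k : κ, G.rank := Finset.sum_le_sum fun _ _ =>
        (Matrix.rank_mul_le_left _ _).trans (Matrix.rank_mul_le_right _ _)
    _ = Fintype.card κ * G.rank := by simp

end Convolution

theorem rank_conv2d (a₁ a₂ b₁ b₂ : ℕ)
    (G : Matrix (Fin a₁) (Fin a₂) ℝ) (H : Matrix (Fin b₁) (Fin b₂) ℝ) :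
    let M : Matrix (Fin (a₁ + b₁ - 1)) (Fin (a₂ + b₂ - 1)) ℝ :=
      fun t₁ t₂ => ∑ τ₁ : Fin a₁, ∑ τ₂ : Fin a₂,
        G τ₁ τ₂ * padMat H ((t₁ : ℤ) - (τ₁ : ℤ)) ((t₂ : ℤ) - (τ₂ : ℤ))
    M.rank ≤ G.rank * H.rank := by
  intro M
  obtain ⟨U, C, hUC⟩ := H.exists_rank_factorization
  have hH : padMat H = fun i j => ∑ k, padVec (Uᵀ k) i * padVec (C k) j := by
    rw [← padMat_mul, hUC]
  calc M.rank = (conv2d _ _ G (padMat H)).rank := rfl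
    _ ≤ Fintype.card (Fin H.rank) * G.rank := by rw [hH]; exact rank_conv2d_le _ _ G _ _
    _ = G.rank * H.rank := by rw [Fintype.card_fin, mul_comm]
end
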